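/- If Z-type single-qubit Paulis X_i and Z_i both belong to the group ⟨M⟩ generated by a set M of Pauli operators, then the channel Π_M := ∘_{P∈M} Π_P satisfies Π_M(ρ) = Π_M((I_i/2) ⊗ Tr_i(ρ)) for all ρ, i.e., qubit i is effectively depolarized. -/

import Mathlib

open Matrix

noncomputable def pX : Matrix (Fin 2) (Fin 2) ℂ := !![0, 1; 1, 0]
noncomputable def pZ : Matrix (Fin 2) (Fin 2) ℂ := !![1, 0; 0, -1]

/-- The single-qubit Pauli letter `X^x Z^z` labelled by its symplectic bits. -/
noncomputable def letterOp (p : ZMod 2 × ZMod 2) : Matrix (Fin 2) (Fin 2) ℂ :=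
  pX ^ p.1.val * pZ ^ p.2.val

/-- The phaseless `n`-qubit Pauli operator with symplectic label `g`. -/
noncomputable def labelOp {n : ℕ} (g : Fin n → ZMod 2 × ZMod 2) :
    Matrix (Fin n → Fin 2) (Fin n → Fin 2) ℂ :=
  Matrix.of fun x y => ∏ i, letterOp (g i) (x i) (y i)

/-- Label of the single-qubit Pauli `X_i`. -/
def xLabel {n : ℕ} (i : Fin n) : Fin n → ZMod 2 × ZMod 2 :=
  fun j => if j = i then (1, 0) else 0

/-- Label of the single-qubit Pauli `Z_i`. -/
def zLabel {n : ℕ} (i : Fin n) : Fin n → ZMod 2 × ZMod 2 :=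
  fun j => if j = i then (0, 1) else 0

/-- Replacing qubit `i` of `ρ` by the maximally mixed state: `(I_i/2) ⊗ Tr_i(ρ)`. -/
noncomputable def depolAt {n : ℕ} (i : Fin n)
    (ρ : Matrix (Fin n → Fin 2) (Fin n → Fin 2) ℂ) :
    Matrix (Fin n → Fin 2) (Fin n → Fin 2) ℂ :=
  Matrix.of fun x y =>
    if x i = y i then
      (1/2 : ℂ) * ∑ b : Fin 2, ρ (Function.update x i b) (Function.update y i b)
    else 0

/-!
Write `T_G(σ) = ∑_{g ∈ G} P_g σ P_g†`. Pauli operators multiply up to a sign,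
`P_g P_h = ± P_{g+h}`, so conjugating by `P_g` after `P_h` is conjugating by `P_{g+h}`; since
`g ↦ g + h` is an involution of `G` when `h ∈ G`, this gives `T_G(P_h σ P_h†) = T_G(σ)`.
On qubit `i`, `(I_i/2) ⊗ Tr_i` is the average of `σ ↦ P σ P†` over `P ∈ {I, X_i, Z_i, X_i Z_i}`:
first `τ = (σ + Z_i σ Z_i)/2` kills the entries off-diagonal in qubit `i`, then
`(τ + X_i τ X_i)/2` averages its two diagonal blocks. Applying the invariance with `h = x_i`
and then `h = z_i` gives the claim.
-/

lemma ZMod.two_cases (a : ZMod 2) : a = 0 ∨ a = 1 := by revert a; decide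

lemma Fin.add_one_add_one (a : Fin 2) : a + 1 + 1 = a := by revert a; decide

lemma Fin.sum_two_eq_add_add_one {M : Type*} [AddCommMonoid M] (c : Fin 2) (F : Fin 2 → M) :
    ∑ b, F b = F c + F (c + 1) := by
  fin_cases c <;> simp [Fin.sum_univ_two, add_comm]

lemma Matrix.smul_mul_mul_conjTranspose_smul {m R : Type*} [Fintype m] [CommSemiring R]
    [StarRing R] {c : R} (hc : star c * c = 1) (A σ : Matrix m m R) :
    c • A * σ * (c • A)ᴴ = A * σ * Aᴴ := by
  simp only [conjTranspose_smul, Matrix.mul_smul, Matrix.smul_mul, smul_smul, hc, one_smul]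

lemma PEquiv.toMatrix_toPEquiv_mul_mul_conjTranspose {m α : Type*} [Fintype m] [DecidableEq m]
    [Semiring α] [StarRing α] (e : m ≃ m) (σ : Matrix m m α) :
    e.toPEquiv.toMatrix * σ * e.toPEquiv.toMatrixᴴ = σ.submatrix e e := by
  ext x y
  simp [PEquiv.toMatrix_toPEquiv_mul, Matrix.mul_apply, Equiv.symm_apply_eq]

lemma pX_mul_pX : pX * pX = 1 := by
  ext u v; fin_cases u <;> fin_cases v <;> simp [pX, Matrix.mul_apply, Fin.sum_univ_two]

lemma pZ_mul_pZ : pZ * pZ = 1 := by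
  ext u v; fin_cases u <;> fin_cases v <;> simp [pZ, Matrix.mul_apply, Fin.sum_univ_two]

lemma pZ_mul_pX : pZ * pX = -(pX * pZ) := by
  ext u v; fin_cases u <;> fin_cases v <;> simp [pX, pZ, Matrix.mul_apply, Fin.sum_univ_two]

lemma letterOp_mul (p q : ZMod 2 × ZMod 2) :
    letterOp p * letterOp q = (-1 : ℂ) ^ (p.2 * q.1).val • letterOp (p + q) := by
  have hXX (A : Matrix (Fin 2) (Fin 2) ℂ) : pX * (pX * A) = A := by
    rw [← mul_assoc, pX_mul_pX, one_mul]
  have hZX (A : Matrix (Fin 2) (Fin 2) ℂ) : pZ * (pX * A) = -(pX * (pZ * A)) := by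
    rw [← mul_assoc, pZ_mul_pX, neg_mul, mul_assoc]
  have h11 : (1 + 1 : ZMod 2) = 0 := rfl
  obtain ⟨a, b⟩ := p
  obtain ⟨c, d⟩ := q
  rcases a.two_cases with rfl | rfl <;> rcases b.two_cases with rfl | rfl <;>
    rcases c.two_cases with rfl | rfl <;> rcases d.two_cases with rfl | rfl <;>
    simp [letterOp, h11, ZMod.val_one_eq_one_mod, mul_assoc, hXX, hZX, pX_mul_pX, pZ_mul_pZ, pZ_mul_pX]

section Pauli

variable {n : ℕ}

def pauliPhase (g h : Fin n → ZMod 2 × ZMod 2) : ℂ :=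
  ∏ j, (-1 : ℂ) ^ ((g j).2 * (h j).1).val

lemma star_pauliPhase_mul_self (g h : Fin n → ZMod 2 × ZMod 2) :
    star (pauliPhase g h) * pauliPhase g h = 1 := by
  simp only [pauliPhase, star_prod, star_pow, star_neg, star_one, ← Finset.prod_mul_distrib,
    ← mul_pow]
  simp

lemma labelOp_mul (g h : Fin n → ZMod 2 × ZMod 2) :
    labelOp g * labelOp h = pauliPhase g h • labelOp (g + h) := by
  ext x y
  calc (labelOp g * labelOp h) x y
      = ∏ j, (letterOp (g j) * letterOp (h j)) (x j) (y j) := by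
        simp only [labelOp, Matrix.mul_apply, Matrix.of_apply, ← Finset.prod_mul_distrib,
          Finset.prod_univ_sum, Fintype.piFinset_univ]
    _ = (pauliPhase g h • labelOp (g + h)) x y := by
        simp [letterOp_mul, labelOp, pauliPhase, Finset.prod_mul_distrib]

lemma labelOp_add_conj (g h : Fin n → ZMod 2 × ZMod 2) (σ) :
    labelOp g * (labelOp h * σ * (labelOp h)ᴴ) * (labelOp g)ᴴ
      = labelOp (g + h) * σ * (labelOp (g + h))ᴴ := by
  rw [← Matrix.smul_mul_mul_conjTranspose_smul (star_pauliPhase_mul_self g h) (labelOp (g + h)),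
    ← labelOp_mul, Matrix.conjTranspose_mul]
  simp only [Matrix.mul_assoc]

end Pauli

section Qubit

variable {n : ℕ}

def flipAt (i : Fin n) : Equiv.Perm (Fin n → Fin 2) :=
  Function.Involutive.toPerm (fun x => Function.update x i (x i + 1)) fun x => by
    simp [Fin.add_one_add_one]

lemma flipAt_apply (i : Fin n) (x : Fin n → Fin 2) :
    flipAt i x = Function.update x i (x i + 1) := rfl

lemma labelOp_xLabel (i : Fin n) : labelOp (xLabel i) = (flipAt i).toPEquiv.toMatrix := by
  ext x y
  have hfactor : ∀ j, letterOp (xLabel i j) (x j) (y j) = if flipAt i x j = y j then 1 else 0 := by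
    intro j
    by_cases hj : j = i
    · subst hj
      simp only [xLabel, letterOp, flipAt_apply, Function.update_self, if_true]
      generalize x j = a
      generalize y j = b
      fin_cases a <;> fin_cases b <;> simp [pX, ZMod.val_one_eq_one_mod]
    · simp [xLabel, letterOp, flipAt_apply, hj, Matrix.one_apply]
  simp [labelOp, hfactor, Finset.prod_boole, funext_iff, eq_comm]

lemma labelOp_zLabel (i : Fin n) :
    labelOp (zLabel i) = Matrix.diagonal fun x => (-1 : ℂ) ^ (x i).val := by
  ext x y
  have hfactor : ∀ j, letterOp (zLabel i j) (x j) (y j)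
      = if x j = y j then (if j = i then (-1 : ℂ) ^ (x i).val else 1) else 0 := by
    intro j
    by_cases hj : j = i
    · subst hj
      simp only [zLabel, letterOp, if_true]
      generalize x j = a
      generalize y j = b
      fin_cases a <;> fin_cases b <;> simp [pZ, ZMod.val_one_eq_one_mod]
    · simp [zLabel, letterOp, hj, Matrix.one_apply]
  simp [labelOp, hfactor, Finset.prod_ite_zero, Matrix.diagonal_apply, funext_iff]

noncomputable def dephaseAt (i : Fin n) (ρ : Matrix (Fin n → Fin 2) (Fin n → Fin 2) ℂ) :
    Matrix (Fin n → Fin 2) (Fin n → Fin 2) ℂ :=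
  (1 / 2 : ℂ) • (ρ + labelOp (zLabel i) * ρ * (labelOp (zLabel i))ᴴ)

lemma dephaseAt_apply (i : Fin n) (ρ : Matrix (Fin n → Fin 2) (Fin n → Fin 2) ℂ)
    (x y : Fin n → Fin 2) : dephaseAt i ρ x y = if x i = y i then ρ x y else 0 := by
  simp only [dephaseAt, labelOp_zLabel, Matrix.diagonal_conjTranspose, Matrix.diagonal_mul,
    Matrix.mul_diagonal, Matrix.smul_apply, Matrix.add_apply, Pi.star_apply, star_pow, star_neg,
    star_one, smul_eq_mul]
  generalize x i = a
  generalize y i = b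
  fin_cases a <;> fin_cases b <;> simp <;> ring

lemma depolAt_eq_half_smul (i : Fin n) (ρ : Matrix (Fin n → Fin 2) (Fin n → Fin 2) ℂ) :
    depolAt i ρ = (1 / 2 : ℂ) • (dephaseAt i ρ
      + labelOp (xLabel i) * dephaseAt i ρ * (labelOp (xLabel i))ᴴ) := by
  ext x y
  rw [labelOp_xLabel, PEquiv.toMatrix_toPEquiv_mul_mul_conjTranspose]
  simp only [depolAt, Matrix.of_apply, Matrix.smul_apply, Matrix.add_apply,
    Matrix.submatrix_apply, dephaseAt_apply, flipAt_apply, Function.update_self, smul_eq_mul]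
  by_cases hxy : x i = y i
  · rw [Fin.sum_two_eq_add_add_one (x i), Function.update_eq_self, hxy, Function.update_eq_self]
    simp
  · simp [hxy]

end Qubit

section Twirl

variable {n : ℕ}

noncomputable def pauliTwirl (G : Finset (Fin n → ZMod 2 × ZMod 2))
    (σ : Matrix (Fin n → Fin 2) (Fin n → Fin 2) ℂ) : Matrix (Fin n → Fin 2) (Fin n → Fin 2) ℂ :=
  ∑ g ∈ G, labelOp g * σ * (labelOp g)ᴴ

lemma pauliTwirl_add (G : Finset (Fin n → ZMod 2 × ZMod 2)) (σ τ) :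
    pauliTwirl G (σ + τ) = pauliTwirl G σ + pauliTwirl G τ := by
  simp only [pauliTwirl, Matrix.mul_add, Matrix.add_mul, Finset.sum_add_distrib]

lemma pauliTwirl_smul (G : Finset (Fin n → ZMod 2 × ZMod 2)) (c : ℂ) (σ) :
    pauliTwirl G (c • σ) = c • pauliTwirl G σ := by
  simp only [pauliTwirl, Matrix.mul_smul, Matrix.smul_mul, Finset.smul_sum]

lemma pauliTwirl_conj {G : Finset (Fin n → ZMod 2 × ZMod 2)} {h : Fin n → ZMod 2 × ZMod 2}
    (hG : ∀ g ∈ G, g + h ∈ G) (σ) :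
    pauliTwirl G (labelOp h * σ * (labelOp h)ᴴ) = pauliTwirl G σ := by
  have hcancel (g : Fin n → ZMod 2 × ZMod 2) : g + h + h = g := by
    rw [add_assoc, ZModModule.add_self, add_zero]
  simp only [pauliTwirl, labelOp_add_conj]
  exact Finset.sum_nbij' (· + h) (· + h) hG hG (fun g _ => hcancel g) (fun g _ => hcancel g)
    fun _ _ => rfl

lemma pauliTwirl_average_conj {G : Finset (Fin n → ZMod 2 × ZMod 2)}
    {h : Fin n → ZMod 2 × ZMod 2} (hG : ∀ g ∈ G, g + h ∈ G) (σ) :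
    pauliTwirl G ((1 / 2 : ℂ) • (σ + labelOp h * σ * (labelOp h)ᴴ)) = pauliTwirl G σ := by
  rw [pauliTwirl_smul, pauliTwirl_add, pauliTwirl_conj hG, ← two_smul ℂ, smul_smul]
  norm_num

end Twirl

theorem stmt8_general (n : ℕ) (i : Fin n) (G : Finset (Fin n → ZMod 2 × ZMod 2))
    (hclosed : ∀ a ∈ G, ∀ b ∈ G, a + b ∈ G)
    (hX : xLabel i ∈ G) (hZ : zLabel i ∈ G) :
    ∀ ρ : Matrix (Fin n → Fin 2) (Fin n → Fin 2) ℂ,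
      (G.card : ℂ)⁻¹ • ∑ g ∈ G, labelOp g * ρ * (labelOp g)ᴴ
        = (G.card : ℂ)⁻¹ • ∑ g ∈ G, labelOp g * depolAt i ρ * (labelOp g)ᴴ := by
  intro ρ
  change _ • pauliTwirl G ρ = _ • pauliTwirl G (depolAt i ρ)
  rw [depolAt_eq_half_smul, pauliTwirl_average_conj fun g hg => hclosed g hg _ hX, dephaseAt,
    pauliTwirl_average_conj fun g hg => hclosed g hg _ hZ]

/-- If both `X_i` and `Z_i` lie in the (phaseless) error group `G = ⟨M⟩`, then the channel
`Π_M(ρ) = (1/|⟨M⟩|) Σ_{Q ∈ ⟨M⟩} Q ρ Q†` satisfies `Π_M(ρ) = Π_M((I_i/2) ⊗ Tr_i(ρ))`: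
qubit `i` is effectively depolarized. -/
theorem stmt8 (n : ℕ) (i : Fin n) (G : Finset (Fin n → ZMod 2 × ZMod 2))
    (hzero : (0 : Fin n → ZMod 2 × ZMod 2) ∈ G)
    (hclosed : ∀ a ∈ G, ∀ b ∈ G, a + b ∈ G)
    (hX : xLabel i ∈ G) (hZ : zLabel i ∈ G) :
    ∀ ρ : Matrix (Fin n → Fin 2) (Fin n → Fin 2) ℂ,
      (G.card : ℂ)⁻¹ • ∑ g ∈ G, labelOp g * ρ * (labelOp g)ᴴ
        = (G.card : ℂ)⁻¹ • ∑ g ∈ G, labelOp g * depolAt i ρ * (labelOp g)ᴴ :=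
  stmt8_general n i G hclosed hX hZ
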